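/- If φ is a measure-preserving map on a probability space (X, A, P) with P ≪ μ, μ finite and φ-invariant, and φ is mixing with respect to μ, then for any measurable sets A and B with P[B] > 0, the conditional probabilities P[φ^{-n}(A) | B] converge as n → ∞ to P_*[A] := μ[A]/μ[X]. -/

import Mathlib

open MeasureTheory Filter Set Topology

/-! Since `P (s ∩ B) = ∫_s 1_B (dP/dμ) dμ`, the claim is the case `g = 1_B (dP/dμ)` of
`∫_{φ⁻ⁿ A} g dμ → (μ A / μ X) ∫ g dμ` for all `g ∈ L¹(μ)`. Mixing says exactly this for
indicators of sets; it extends to simple functions by linearity and then to all of `L¹` by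
density, because the functionals `g ↦ ∫_{φ⁻ⁿ A} g dμ` are all 1-Lipschitz. -/

namespace MeasureTheory

variable {X E : Type*} [MeasurableSpace X] [NormedAddCommGroup E] [NormedSpace ℝ E]
  {μ : Measure X}

theorem lipschitzWith_one_setIntegral (s : Set X) :
    LipschitzWith 1 fun f : X →₁[μ] E => ∫ x in s, f x ∂μ := by
  refine LipschitzWith.of_dist_le_mul fun f g => ?_
  have hf := L1.integrable_coeFn f
  have hg := L1.integrable_coeFn g
  rw [NNReal.coe_one, one_mul, dist_eq_norm, dist_eq_norm, L1.norm_eq_integral_norm,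
    ← integral_sub hf.integrableOn hg.integrableOn]
  calc ‖∫ x in s, f x - g x ∂μ‖ ≤ ∫ x in s, ‖f x - g x‖ ∂μ := norm_integral_le_integral_norm _
    _ ≤ ∫ x, ‖f x - g x‖ ∂μ :=
        setIntegral_le_integral (hf.sub hg).norm (.of_forall fun _ => norm_nonneg _)
    _ = ∫ x, ‖(f - g) x‖ ∂μ := integral_congr_ae <| by
        filter_upwards [Lp.coeFn_sub f g] with x hx
        rw [hx, Pi.sub_apply]

variable [CompleteSpace E] {φ : X → X}

theorem tendsto_setIntegral_preimage_iterate_of_mixing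
    (hmix : ∀ A B : Set X, MeasurableSet A → MeasurableSet B →
      Tendsto (fun n => (μ (φ^[n] ⁻¹' A ∩ B)).toReal) atTop
        (𝓝 ((μ A).toReal / (μ Set.univ).toReal * (μ B).toReal)))
    {A : Set X} (hA : MeasurableSet A) {g : X → E} (hg : Integrable g μ) :
    Tendsto (fun n => ∫ x in φ^[n] ⁻¹' A, g x ∂μ) atTop
      (𝓝 (((μ A).toReal / (μ Set.univ).toReal) • ∫ x, g x ∂μ)) := by
  set r := (μ A).toReal / (μ Set.univ).toReal
  refine hg.induction (P := fun g => Tendsto (fun n => ∫ x in φ^[n] ⁻¹' A, g x ∂μ) atTop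
    (𝓝 (r • ∫ x, g x ∂μ))) ?indicator ?add ?closed ?congr
  case indicator =>
    intro c s hs _
    simp only [integral_indicator hs, setIntegral_const,
      measureReal_def, Measure.restrict_apply hs, inter_comm s, smul_smul]
    exact (hmix A s hA hs).smul_const c
  case add =>
    intro f g _ hf hg hf_lim hg_lim
    simp only [Pi.add_apply, integral_add hf hg, integral_add hf.integrableOn hg.integrableOn,
      smul_add]
    exact hf_lim.add hg_lim
  case closed =>
    exact (LipschitzWith.uniformEquicontinuous _ 1 fun n =>
      lipschitzWith_one_setIntegral (φ^[n] ⁻¹' A)).equicontinuous.isClosed_setOfPred_tendsto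
      (continuous_const.smul continuous_integral)
  case congr =>
    intro f g hfg _ hf_lim
    simpa only [integral_congr_ae hfg, integral_congr_ae (ae_restrict_of_ae hfg)] using hf_lim

end MeasureTheory

theorem mixing_conditional_limit
    {X : Type*} [MeasurableSpace X] (μ P : Measure X)
    [IsFiniteMeasure μ] [IsProbabilityMeasure P] (φ : X → X)
    (hac : P ≪ μ)
    (hmix : ∀ A B : Set X, MeasurableSet A → MeasurableSet B →
      Tendsto (fun n => (μ (φ^[n] ⁻¹' A ∩ B)).toReal) atTop
        (𝓝 ((μ A).toReal / (μ Set.univ).toReal * (μ B).toReal)))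
    (A B : Set X) (hA : MeasurableSet A) (hB : MeasurableSet B) (hPB : 0 < P B) :
    Tendsto (fun n => (P (φ^[n] ⁻¹' A ∩ B)).toReal / (P B).toReal) atTop
      (𝓝 ((μ A).toReal / (μ Set.univ).toReal)) := by
  set g : X → ℝ := B.indicator fun x => (P.rnDeriv μ x).toReal
  have hg : Integrable g μ := Measure.integrable_toReal_rnDeriv.indicator hB
  have hg_setIntegral (s : Set X) : ∫ x in s, g x ∂μ = P.real (s ∩ B) := by
    rw [setIntegral_indicator hB, Measure.setIntegral_toReal_rnDeriv hac]
  have key := tendsto_setIntegral_preimage_iterate_of_mixing hmix hA hg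
  rw [← setIntegral_univ, hg_setIntegral, univ_inter] at key
  simp only [hg_setIntegral, smul_eq_mul, measureReal_def] at key
  have hPB_real : (P B).toReal ≠ 0 := ENNReal.toReal_ne_zero.mpr ⟨hPB.ne', measure_ne_top P B⟩
  simpa only [mul_div_assoc, div_self hPB_real, mul_one] using key.div_const (P B).toReal
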